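/- Let X be a nonsingular BV algebra, let ξ be an infinitesimal canonical map of X with logarithmic Jacobian e_ξ, and let S be a BV quantum master action of X. Then the ξ-variation δ̂_ξS = ξ(S) + e_ξ is a 0-cocycle of the variation operator Δ_{XS}: Δ_X(δ̂_ξS) + (S, δ̂_ξS)_X = 0. -/

import Mathlib

/-!
Common setup: real unital ℤ-graded (graded-)commutative algebras, BV Laplacians,
BV brackets, BV algebra structures, canonical maps and master actions.
-/

/-- Graded commutativity with Koszul signs: `f * g = (-1)^{|f||g|} g * f`
for homogeneous `f`, `g`. -/
def GradedComm {X : Type*} [Ring X] [Algebra ℝ X] (𝒜 : ℤ → Submodule ℝ X) : Prop :=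
  ∀ (i j : ℤ) (f g : X), f ∈ 𝒜 i → g ∈ 𝒜 j → f * g = ((-1 : ℝ) ^ (i * j)) • (g * f)

/-- `D` is a BV Laplacian on the ℤ-graded algebra `X` with grading `𝒜`:
it raises degree by `1`, is a second-order differential operator
(seven-term identity on homogeneous elements), squares to zero and kills `1`. -/
def IsBVLaplacian {X : Type*} [Ring X] [Algebra ℝ X]
    (𝒜 : ℤ → Submodule ℝ X) (D : X →ₗ[ℝ] X) : Prop :=
  (∀ (i : ℤ) (f : X), f ∈ 𝒜 i → D f ∈ 𝒜 (i + 1)) ∧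
  (∀ (i j k : ℤ) (f g h : X), f ∈ 𝒜 i → g ∈ 𝒜 j → h ∈ 𝒜 k →
    D (f * g * h) =
      -(D f * g * h) - ((-1 : ℝ) ^ i) • (f * D g * h)
        - ((-1 : ℝ) ^ (i + j)) • (f * g * D h)
        + D (f * g) * h + ((-1 : ℝ) ^ ((i + 1) * j)) • (g * D (f * h))
        + ((-1 : ℝ) ^ i) • (f * D (g * h))) ∧
  (∀ f : X, D (D f) = 0) ∧
  D 1 = 0

/-- `Br` is the BV bracket associated with the Laplacian `D`: it is the bilinear
map given on homogeneous `f`, `g` by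
`(f,g) = (-1)^{|f|} (D(fg) - (Df)g - (-1)^{|f|} f(Dg))`. -/
def IsBVBracketOf {X : Type*} [Ring X] [Algebra ℝ X]
    (𝒜 : ℤ → Submodule ℝ X) (D : X →ₗ[ℝ] X) (Br : X →ₗ[ℝ] X →ₗ[ℝ] X) : Prop :=
  ∀ (i j : ℤ) (f g : X), f ∈ 𝒜 i → g ∈ 𝒜 j →
    Br f g = ((-1 : ℝ) ^ i) • (D (f * g) - D f * g - ((-1 : ℝ) ^ i) • (f * D g))

/-- A BV algebra structure on the ℤ-graded algebra `X` with grading `𝒜`: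
graded commutativity, a BV Laplacian `Δ` and its associated BV bracket. -/
structure BVAlgebraStr (X : Type*) [Ring X] [Algebra ℝ X]
    (𝒜 : ℤ → Submodule ℝ X) where
  grcomm : GradedComm 𝒜
  Δ : X →ₗ[ℝ] X
  isBVLaplacian : IsBVLaplacian 𝒜 Δ
  bracket : X →ₗ[ℝ] X →ₗ[ℝ] X
  isBracket : IsBVBracketOf 𝒜 Δ bracket

/-- The bracket `Br` is nonsingular: its center is exactly `ℝ·1`. -/
def IsNonsingularBracket {X : Type*} [Ring X] [Algebra ℝ X]
    (Br : X →ₗ[ℝ] X →ₗ[ℝ] X) : Prop :=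
  ∀ c : X, (∀ f : X, Br f c = 0) ↔ ∃ r : ℝ, c = algebraMap ℝ X r

/-- `α` is a canonical map with logarithmic Jacobian `r`: a degree-preserving
isomorphism of unital algebras with `Δ_Y(αf) - α(Δ_X f) + (r, αf)_Y = 0`,
where `r` has degree `0`. -/
def IsCanonicalWithJacobian {X Y : Type*} [Ring X] [Algebra ℝ X] [Ring Y] [Algebra ℝ Y]
    (𝒜 : ℤ → Submodule ℝ X) (ℬ : ℤ → Submodule ℝ Y)
    (ΔX : X →ₗ[ℝ] X) (ΔY : Y →ₗ[ℝ] Y) (BrY : Y →ₗ[ℝ] Y →ₗ[ℝ] Y)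
    (α : X ≃ₐ[ℝ] Y) (r : Y) : Prop :=
  (∀ (i : ℤ) (f : X), f ∈ 𝒜 i → α f ∈ ℬ i) ∧ r ∈ ℬ 0 ∧
  (∀ f : X, ΔY (α f) - α (ΔX f) + BrY r (α f) = 0)

/-- `ξ` is an infinitesimal canonical map with logarithmic Jacobian `e`:
a degree-`0` derivation with `Δ(ξf) - ξ(Δf) + (e, f) = 0`, `e` of degree `0`. -/
def IsInfCanonicalWithJacobian {X : Type*} [Ring X] [Algebra ℝ X]
    {𝒜 : ℤ → Submodule ℝ X} (B : BVAlgebraStr X 𝒜)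
    (ξ : X →ₗ[ℝ] X) (e : X) : Prop :=
  (∀ (i : ℤ) (f : X), f ∈ 𝒜 i → ξ f ∈ 𝒜 i) ∧
  (∀ f g : X, ξ (f * g) = ξ f * g + f * ξ g) ∧
  e ∈ 𝒜 0 ∧
  (∀ f : X, B.Δ (ξ f) - ξ (B.Δ f) + B.bracket e f = 0)

/-- `S` is a BV quantum master action: a degree-`0` element satisfying the
quantum master equation `ΔS + (1/2)(S,S) = 0`. -/
def IsMasterAction {X : Type*} [Ring X] [Algebra ℝ X]
    {𝒜 : ℤ → Submodule ℝ X} (B : BVAlgebraStr X 𝒜) (S : X) : Prop :=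
  S ∈ 𝒜 0 ∧ B.Δ S + (1 / 2 : ℝ) • B.bracket S S = 0

/-!
Applying the canonical relation `Δ(ξf) - ξ(Δf) + (e, f) = 0` to `Δf` and using `Δ² = 0` shows
that `Δ e` brackets trivially with everything; by nonsingularity it is a constant, and having
degree `1` it vanishes. Since `ξ` commutes with `Δ` up to the derivation `(e, ·)`, it is a
derivation of the bracket on degree-`0` elements. Applying `ξ` to the master equation
`ΔS + ½(S, S) = 0` thus gives `Δ(ξS) + (e, S) + (S, ξS) = 0`, which is the claim because
`Δe = 0` and `(S, e) = (e, S)`.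
-/

theorem neg_one_zpow_mul_self (i : ℤ) : (-1 : ℝ) ^ i * (-1) ^ i = 1 := by
  rw [← mul_zpow]; norm_num

namespace GradedComm

variable {X : Type*} [Ring X] [Algebra ℝ X] {𝒜 : ℤ → Submodule ℝ X} {f g : X} {i j : ℤ}

theorem mul_comm_of_mem_zero (h𝒜 : GradedComm 𝒜) (hf : f ∈ 𝒜 0) (hg : g ∈ 𝒜 j) :
    f * g = g * f := by
  simpa using h𝒜 0 j f g hf hg

theorem mul_comm_of_mem_one (h𝒜 : GradedComm 𝒜) (hf : f ∈ 𝒜 i) (hg : g ∈ 𝒜 1) :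
    f * g = (-1 : ℝ) ^ i • (g * f) := by
  simpa using h𝒜 i 1 f g hf hg

end GradedComm

namespace BVAlgebraStr

variable {X : Type*} [Ring X] [Algebra ℝ X] {𝒜 : ℤ → Submodule ℝ X} (B : BVAlgebraStr X 𝒜)
  {e f g h : X} {i j k : ℤ}

theorem Δ_mem (hf : f ∈ 𝒜 i) : B.Δ f ∈ 𝒜 (i + 1) :=
  B.isBVLaplacian.1 i f hf

@[simp]
theorem Δ_Δ (f : X) : B.Δ (B.Δ f) = 0 :=
  B.isBVLaplacian.2.2.1 f

theorem bracket_of_mem_zero (hf : f ∈ 𝒜 0) (hg : g ∈ 𝒜 j) :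
    B.bracket f g = B.Δ (f * g) - B.Δ f * g - f * B.Δ g := by
  simpa using B.isBracket 0 j f g hf hg

theorem bracket_comm_of_mem_zero (hf : f ∈ 𝒜 0) (hg : g ∈ 𝒜 0) :
    B.bracket f g = B.bracket g f := by
  have hΔf : B.Δ f ∈ 𝒜 1 := by simpa using B.Δ_mem hf
  have hΔg : B.Δ g ∈ 𝒜 1 := by simpa using B.Δ_mem hg
  rw [B.bracket_of_mem_zero hf hg, B.bracket_of_mem_zero hg hf,
    B.grcomm.mul_comm_of_mem_zero hf hg, B.grcomm.mul_comm_of_mem_zero hf hΔg,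
    B.grcomm.mul_comm_of_mem_zero hg hΔf]
  abel

theorem bracket_mul_of_mem_zero [SetLike.GradedMul 𝒜] (he : e ∈ 𝒜 0) (hg : g ∈ 𝒜 j)
    (hh : h ∈ 𝒜 k) :
    B.bracket e (g * h) = B.bracket e g * h + (-1 : ℝ) ^ j • (g * B.bracket e h) := by
  have hΔe : B.Δ e ∈ 𝒜 1 := by simpa using B.Δ_mem he
  have hgh : g * h ∈ 𝒜 (j + k) := SetLike.mul_mem_graded hg hh
  have hleibniz := B.isBVLaplacian.2.1 0 j k e g h he hg hh
  simp only [zpow_zero, one_smul, zero_add, one_mul] at hleibniz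
  rw [B.bracket_of_mem_zero he hgh, B.bracket_of_mem_zero he hg, B.bracket_of_mem_zero he hh,
    ← mul_assoc, hleibniz, mul_sub, mul_sub, ← mul_assoc g, ← mul_assoc g,
    ← B.grcomm.mul_comm_of_mem_zero he hg, B.grcomm.mul_comm_of_mem_one hg hΔe]
  simp only [sub_mul, smul_mul_assoc, smul_sub, smul_smul, mul_assoc, neg_one_zpow_mul_self,
    one_smul]
  module

theorem Δ_bracket_add_bracket_Δ_of_mem_zero (he : e ∈ 𝒜 0) (hf : f ∈ 𝒜 i) :
    B.Δ (B.bracket e f) + B.bracket e (B.Δ f) = -B.bracket f (B.Δ e) := by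
  have hΔe : B.Δ e ∈ 𝒜 1 := by simpa using B.Δ_mem he
  have hΔf : B.Δ f ∈ 𝒜 (i + 1) := B.Δ_mem hf
  rw [B.bracket_of_mem_zero he hf, B.bracket_of_mem_zero he hΔf, B.isBracket i 1 f _ hf hΔe,
    B.grcomm.mul_comm_of_mem_one hf hΔe, B.grcomm.mul_comm_of_mem_one hΔf hΔe]
  simp only [map_sub, map_smul, Δ_Δ, mul_zero, smul_zero, sub_zero, zero_sub, smul_sub, smul_smul,
    neg_one_zpow_mul_self, zpow_add_one₀ (show (-1 : ℝ) ≠ 0 by norm_num), ← mul_assoc]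
  module

end BVAlgebraStr

namespace IsInfCanonicalWithJacobian

variable {X : Type*} [Ring X] [Algebra ℝ X] {𝒜 : ℤ → Submodule ℝ X} {B : BVAlgebraStr X 𝒜}
  {ξ : X →ₗ[ℝ] X} {e f g : X} {j : ℤ}

theorem map_mem (hξ : IsInfCanonicalWithJacobian B ξ e) (hf : f ∈ 𝒜 j) : ξ f ∈ 𝒜 j :=
  hξ.1 j f hf

theorem map_mul (hξ : IsInfCanonicalWithJacobian B ξ e) (f g : X) :
    ξ (f * g) = ξ f * g + f * ξ g :=
  hξ.2.1 f g

theorem jacobian_mem (hξ : IsInfCanonicalWithJacobian B ξ e) : e ∈ 𝒜 0 :=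
  hξ.2.2.1

theorem map_Δ (hξ : IsInfCanonicalWithJacobian B ξ e) (f : X) :
    ξ (B.Δ f) = B.Δ (ξ f) + B.bracket e f := by
  linear_combination (norm := abel) -hξ.2.2.2 f

theorem Δ_bracket_add_bracket_Δ (hξ : IsInfCanonicalWithJacobian B ξ e) (f : X) :
    B.Δ (B.bracket e f) + B.bracket e (B.Δ f) = 0 := by
  have h := hξ.map_Δ (B.Δ f)
  rw [B.Δ_Δ, map_zero, hξ.map_Δ, map_add, B.Δ_Δ, zero_add] at h
  exact h.symm

theorem bracket_Δ_eq_zero [DirectSum.Decomposition 𝒜] (hξ : IsInfCanonicalWithJacobian B ξ e)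
    (f : X) : B.bracket f (B.Δ e) = 0 := by
  induction f using DirectSum.Decomposition.inductionOn 𝒜 with
  | zero => simp
  | homogeneous f =>
    rw [← neg_eq_zero, ← B.Δ_bracket_add_bracket_Δ_of_mem_zero hξ.jacobian_mem f.2,
      hξ.Δ_bracket_add_bracket_Δ]
  | add f g hf hg => simp [hf, hg]

theorem Δ_eq_zero [GradedAlgebra 𝒜] (hX : IsNonsingularBracket B.bracket)
    (hξ : IsInfCanonicalWithJacobian B ξ e) : B.Δ e = 0 := by
  obtain ⟨r, hr⟩ := (hX (B.Δ e)).mp hξ.bracket_Δ_eq_zero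
  have hΔe0 : B.Δ e ∈ 𝒜 0 := hr ▸ SetLike.algebraMap_mem_graded 𝒜 r
  have hΔe1 : B.Δ e ∈ 𝒜 1 := by simpa using B.Δ_mem hξ.jacobian_mem
  by_contra hne
  exact zero_ne_one (DirectSum.degree_eq_of_mem_mem 𝒜 hΔe0 hΔe1 hne)

theorem map_bracket_of_mem_zero [SetLike.GradedMul 𝒜] (hξ : IsInfCanonicalWithJacobian B ξ e)
    (hf : f ∈ 𝒜 0) (hg : g ∈ 𝒜 j) :
    ξ (B.bracket f g) = B.bracket (ξ f) g + B.bracket f (ξ g) := by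
  rw [B.bracket_of_mem_zero hf hg, B.bracket_of_mem_zero (hξ.map_mem hf) hg,
    B.bracket_of_mem_zero hf (hξ.map_mem hg), map_sub, map_sub, hξ.map_Δ, hξ.map_mul, hξ.map_mul,
    hξ.map_mul, hξ.map_Δ, hξ.map_Δ, map_add, B.bracket_mul_of_mem_zero hξ.jacobian_mem hf hg]
  simp only [zpow_zero, one_smul, add_mul, mul_add]
  abel

end IsInfCanonicalWithJacobian

/-- the ξ-variation `δ̂_ξ S = ξ(S) + e_ξ` of a master action is a
0-cocycle of its variation operator. -/
theorem stmt18 {X : Type*} [Ring X] [Algebra ℝ X]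
    (𝒜 : ℤ → Submodule ℝ X) [GradedAlgebra 𝒜] (B : BVAlgebraStr X 𝒜)
    (hX : IsNonsingularBracket B.bracket)
    (ξ : X →ₗ[ℝ] X) (e : X) (hξ : IsInfCanonicalWithJacobian B ξ e)
    (S : X) (hS : IsMasterAction B S) :
    B.Δ (ξ S + e) + B.bracket S (ξ S + e) = 0 := by
  obtain ⟨hS0, hmaster⟩ := hS
  have hξS0 : ξ S ∈ 𝒜 0 := hξ.map_mem hS0
  have hvar := congrArg ξ hmaster
  rw [map_add, map_smul, hξ.map_Δ, hξ.map_bracket_of_mem_zero hS0 hS0,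
    B.bracket_comm_of_mem_zero hξS0 hS0, map_zero] at hvar
  rw [map_add, map_add, hξ.Δ_eq_zero hX, B.bracket_comm_of_mem_zero hS0 hξ.jacobian_mem]
  linear_combination (norm := module) hvar
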